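/- Let I be a finite index set, I_f ⊆ I, ε = (ε_{ij})_{i,j∈I} a skew-symmetric rational matrix, and m = (m_{ij})_{i,j∈I} a symmetric rational matrix with m_{ij} = 0 unless both i ∈ I_f and j ∈ I_f. Fix k ∈ I ∖ I_f and put ε̃ := ε + m, ε̃' := μ_k(ε) + m. Let P, P' : ℚ^I → ℚ^I be the linear maps P(a)_i = Σ_{j∈I} ε̃_{ij} a_j and P'(a)_i = Σ_{j∈I} ε̃'_{ij} a_j. Then μ^T_{k,ε} ∘ P = P' ∘ μ^{aT}_{k,ε}; that is, the tropicalized extended ensemble map intertwines the tropical A-mutation and the tropical X-mutation in any unfrozen direction k. -/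
import Mathlib


namespace SL3

/-- `[x]_+ := max(0,x)` for rationals. -/
def pos (x : ℚ) : ℚ := max 0 x

/-- `[x,y,z]_+ := max(0, x, x+y, x+y+z)` for rationals. -/
def pos3 (x y z : ℚ) : ℚ := max (max 0 x) (max (x + y) (x + y + z))

/-- Matrix mutation in direction `k`. -/
def mutate {I : Type*} [DecidableEq I] (ε : Matrix I I ℚ) (k : I) : Matrix I I ℚ :=
  Matrix.of fun i j =>
    if i = k ∨ j = k then -ε i j
    else ε i j + (1 / 2) * (ε i k * |ε k j| + |ε i k| * ε k j)

/-- The tropical cluster X-mutation `μ^T_{k,ε}`. -/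
def xMut {I : Type*} [DecidableEq I] (ε : Matrix I I ℚ) (k : I) (x : I → ℚ) : I → ℚ :=
  fun i => if i = k then -x k
    else x i + pos (-(ε i k)) * pos (x k) - pos (ε i k) * pos (-(x k))

/-- The tropical cluster A-mutation `μ^{aT}_{k,ε}`. -/
def aMut {I : Type*} [Fintype I] [DecidableEq I] (ε : Matrix I I ℚ) (k : I) (a : I → ℚ) :
    I → ℚ :=
  fun i => if i = k then
      -a k + max (∑ j, pos (ε k j) * a j) (∑ j, pos (-(ε k j)) * a j)
    else a i

/-- Pairs `(a,b)` (0-indexed) with entry `1` in the sl3 quadrilateral exchange matrix. -/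
def quadOnes : List (Fin 12 × Fin 12) :=
  [(0,3),(0,4),(1,0),(1,5),(1,7),(2,1),(2,8),(3,2),(3,9),(3,11),(4,1),(5,6),(6,1),(7,2),
   (8,3),(9,10),(10,3),(11,0)]

/-- Pairs `(a,b)` (0-indexed) with entry `1/2` in the sl3 quadrilateral exchange matrix. -/
def quadHalves : List (Fin 12 × Fin 12) := [(5,4),(7,6),(9,8),(11,10)]

/-- The sl3 quadrilateral exchange matrix (0-indexed: paper's vertex `i` is index `i-1`). -/
def epsQuad : Matrix (Fin 12) (Fin 12) ℚ :=
  Matrix.of fun i j =>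
    if (i, j) ∈ quadOnes then 1
    else if (j, i) ∈ quadOnes then -1
    else if (i, j) ∈ quadHalves then 1 / 2
    else if (j, i) ∈ quadHalves then -(1 / 2)
    else 0

lemma pos_zero : pos 0 = 0 := by simp [pos]

lemma pos_sub_pos (x : ℚ) : pos x - pos (-x) = x := by
  unfold pos
  rcases le_total x 0 with h | h
  · rw [max_eq_left h, max_eq_right (neg_nonneg.mpr h)]; ring
  · rw [max_eq_right h, max_eq_left (neg_nonpos.mpr h)]; ring

lemma half_identity (x y : ℚ) :
    (1 / 2 : ℚ) * (x * |y| + |x| * y) = pos x * pos y - pos (-x) * pos (-y) := by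
  unfold pos
  rcases le_total x 0 with hx | hx <;> rcases le_total y 0 with hy | hy
  · rw [abs_of_nonpos hx, abs_of_nonpos hy, max_eq_left hx, max_eq_left hy,
      max_eq_right (neg_nonneg.mpr hx), max_eq_right (neg_nonneg.mpr hy)]; ring
  · rw [abs_of_nonpos hx, abs_of_nonneg hy, max_eq_left hx, max_eq_right hy,
      max_eq_right (neg_nonneg.mpr hx), max_eq_left (neg_nonpos.mpr hy)]; ring
  · rw [abs_of_nonneg hx, abs_of_nonpos hy, max_eq_right hx, max_eq_left hy,
      max_eq_left (neg_nonpos.mpr hx), max_eq_right (neg_nonneg.mpr hy)]; ring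
  · rw [abs_of_nonneg hx, abs_of_nonneg hy, max_eq_right hx, max_eq_right hy,
      max_eq_left (neg_nonpos.mpr hx), max_eq_left (neg_nonpos.mpr hy)]; ring

lemma key_identity (e s t : ℚ) :
    pos e * s - pos (-e) * t - e * max s t = pos (-e) * pos (s - t) - pos e * pos (t - s) := by
  unfold pos
  rcases le_total s t with h | h <;> rcases le_total e 0 with he | he
  · rw [max_eq_right h, max_eq_left he, max_eq_right (neg_nonneg.mpr he),
      max_eq_left (sub_nonpos.mpr h), max_eq_right (sub_nonneg.mpr h)]; ring
  · rw [max_eq_right h, max_eq_right he, max_eq_left (neg_nonpos.mpr he),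
      max_eq_left (sub_nonpos.mpr h), max_eq_right (sub_nonneg.mpr h)]; ring
  · rw [max_eq_left h, max_eq_left he, max_eq_right (neg_nonneg.mpr he),
      max_eq_right (sub_nonneg.mpr h), max_eq_left (sub_nonpos.mpr h)]; ring
  · rw [max_eq_left h, max_eq_right he, max_eq_left (neg_nonpos.mpr he),
      max_eq_right (sub_nonneg.mpr h), max_eq_left (sub_nonpos.mpr h)]; ring

/-- The tropicalized Goncharov–Shen extended ensemble map `a ↦ (Σ_j (ε+m)_{ij} a_j)_i`
intertwines the tropical A-mutation and the tropical X-mutation in any unfrozen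
direction `k`. -/
theorem tropical_ensemble_intertwines {I : Type*} [Fintype I] [DecidableEq I]
    (If : Set I) (ε m : Matrix I I ℚ)
    (hskew : ∀ i j, ε j i = -ε i j)
    (hsymm : ∀ i j, m i j = m j i)
    (hsupp : ∀ i j, ¬(i ∈ If ∧ j ∈ If) → m i j = 0)
    (k : I) (hk : k ∉ If) :
    ∀ a : I → ℚ,
      xMut ε k (fun i => ∑ j, (ε i j + m i j) * a j) =
        fun i => ∑ j, ((mutate ε k) i j + m i j) * (aMut ε k a j) := by
  intro a
  have hmkr : ∀ j, m k j = 0 := fun j => hsupp k j fun h => hk h.1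
  have hmkl : ∀ j, m j k = 0 := fun j => hsupp j k fun h => hk h.2
  have hekk : ε k k = 0 := by have := hskew k k; linarith
  funext i
  by_cases hik : i = k
  · simp only [xMut, if_pos hik]
    have hterm : ∀ j ∈ (Finset.univ : Finset I),
        ((mutate ε k) i j + m i j) * aMut ε k a j = -((ε i j + m i j) * a j) := by
      intro j _
      by_cases hjk : j = k
      · simp only [mutate, Matrix.of_apply, aMut, hik, hjk, hekk, hmkr,
          eq_self_iff_true, true_or, or_true, if_true]
        ring
      · simp only [mutate, Matrix.of_apply, aMut, hik, hmkr, if_neg hjk,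
          eq_self_iff_true, true_or, if_true]
        ring
    rw [Finset.sum_congr rfl hterm, Finset.sum_neg_distrib, hik]
  · simp only [xMut, if_neg hik]
    have hxk : (∑ j, (ε k j + m k j) * a j)
        = (∑ j, pos (ε k j) * a j) - (∑ j, pos (-(ε k j)) * a j) := by
      rw [← Finset.sum_sub_distrib]
      exact Finset.sum_congr rfl fun j _ => by
        rw [hmkr j, add_zero, ← sub_mul, pos_sub_pos]
    have hterm : ∀ j ∈ (Finset.univ : Finset I),
        ((mutate ε k) i j + m i j) * aMut ε k a j =
          (ε i j + m i j) * a j + pos (ε i k) * (pos (ε k j) * a j)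
            - pos (-(ε i k)) * (pos (-(ε k j)) * a j)
            + (if j = k then (-(ε i k)) *
                max (∑ j, pos (ε k j) * a j) (∑ j, pos (-(ε k j)) * a j) else 0) := by
      intro j _
      by_cases hjk : j = k
      · simp only [mutate, Matrix.of_apply, aMut, hjk, hekk, hmkl, hmkr, neg_zero,
          pos_zero, eq_self_iff_true, or_true, if_true]
        ring
      · simp only [mutate, Matrix.of_apply, aMut, if_neg hjk,
          if_neg (not_or.mpr ⟨hik, hjk⟩)]
        rw [half_identity]
        ring
    rw [Finset.sum_congr rfl hterm, Finset.sum_add_distrib, Finset.sum_sub_distrib,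
      Finset.sum_add_distrib, ← Finset.mul_sum, ← Finset.mul_sum,
      Finset.sum_ite_eq' Finset.univ k, if_pos (Finset.mem_univ k), hxk, neg_sub]
    linarith [key_identity (ε i k) (∑ j, pos (ε k j) * a j) (∑ j, pos (-(ε k j)) * a j)]

end SL3
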